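/- If y is within distance c < d/2 of a root x_i of a monic polynomial P with roots x_1,...,x_m of multiplicities α_1,...,α_m (∑α_j = n), all other roots at distance ≥ d from x_i, and α_i(d − 2c) − c(n − α_i) > 0, then |α_i + (y − x_i)·∑_{j≠i} α_j/(y − x_j)| ≥ [α_i(d − 2c) − c(n − α_i)]/(d − 2c) > 0; in particular, P'(y)·(y − x_i) ≠ 0 whenever y ≠ x_i. -/

import Mathlib

/-!
For `j ≠ i`, `|y - x j| ≥ d - c > d - 2c`, so `|∑_{j≠i} α j/(y - x j)| ≤ (n - α i)/(d - 2c)`;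
multiplied by `|y - x i| ≤ c`, this perturbation is too small to cancel `α i`.
Since `P' / P = ∑ α j/(y - x j)` away from the roots, `P'(y)(y - x i) = P(y)·Pᵢ`, a product of two
nonzero factors.
-/

open Finset

section LogDeriv

variable {𝕜 : Type*} [NontriviallyNormedField 𝕜] {ι : Type*}

theorem logDeriv_prod_sub_pow (s : Finset ι) (x : ι → 𝕜) (α : ι → ℕ) {y : 𝕜}
    (hy : ∀ j ∈ s, y ≠ x j) :
    logDeriv (fun t => ∏ j ∈ s, (t - x j) ^ α j) y = ∑ j ∈ s, α j / (y - x j) := by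
  rw [logDeriv_prod (f := fun j t => (t - x j) ^ α j)
    (fun j hj => pow_ne_zero _ (sub_ne_zero.2 (hy j hj))) (fun _ _ => by fun_prop)]
  refine sum_congr rfl fun j _ => ?_
  rw [logDeriv_fun_pow (by fun_prop)]
  simp [logDeriv_apply, div_eq_mul_inv]

theorem deriv_prod_sub_pow (s : Finset ι) (x : ι → 𝕜) (α : ι → ℕ) {y : 𝕜}
    (hy : ∀ j ∈ s, y ≠ x j) :
    deriv (fun t => ∏ j ∈ s, (t - x j) ^ α j) y =
      (∏ j ∈ s, (y - x j) ^ α j) * ∑ j ∈ s, α j / (y - x j) := by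
  have hP : ∏ j ∈ s, (y - x j) ^ α j ≠ 0 :=
    prod_ne_zero_iff.2 fun j hj => pow_ne_zero _ (sub_ne_zero.2 (hy j hj))
  rw [← logDeriv_prod_sub_pow s x α hy, logDeriv_apply, mul_div_cancel₀ _ hP]

end LogDeriv

theorem sum_div_sub_mul_sub_eq {K ι : Type*} [Field K] [DecidableEq ι] {s : Finset ι}
    {i : ι} (hi : i ∈ s) (a : ι → K) (x : ι → K) {y : K} (hy : y ≠ x i) :
    (∑ j ∈ s, a j / (y - x j)) * (y - x i) =
      a i + (y - x i) * ∑ j ∈ s.erase i, a j / (y - x j) := by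
  rw [← add_sum_erase s _ hi, add_mul, div_mul_cancel₀ _ (sub_ne_zero.2 hy), mul_comm _ (y - x i)]

theorem abs_sum_div_le {ι : Type*} {s : Finset ι} {a z : ι → ℝ} {δ : ℝ}
    (ha : ∀ j ∈ s, 0 ≤ a j) (hδ : 0 < δ) (hz : ∀ j ∈ s, δ ≤ |z j|) :
    |∑ j ∈ s, a j / z j| ≤ (∑ j ∈ s, a j) / δ := by
  calc |∑ j ∈ s, a j / z j| ≤ ∑ j ∈ s, |a j / z j| := abs_sum_le_sum_abs _ _
    _ ≤ ∑ j ∈ s, a j / δ := sum_le_sum fun j hj => by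
        rw [abs_div, abs_of_nonneg (ha j hj)]
        exact div_le_div_of_nonneg_left (ha j hj) hδ (hz j hj)
    _ = (∑ j ∈ s, a j) / δ := (sum_div _ _ _).symm

theorem div_le_abs_add_mul_sum_div {ι : Type*} {s : Finset ι} {a z : ι → ℝ} {A u c δ : ℝ}
    (hA : 0 ≤ A) (ha : ∀ j ∈ s, 0 ≤ a j) (hδ : 0 < δ) (hz : ∀ j ∈ s, δ ≤ |z j|)
    (hu : |u| ≤ c) :
    (A * δ - c * ∑ j ∈ s, a j) / δ ≤ |A + u * ∑ j ∈ s, a j / z j| := by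
  have hS := abs_sum_div_le ha hδ hz
  have huS : |u * ∑ j ∈ s, a j / z j| ≤ c * ((∑ j ∈ s, a j) / δ) := by
    rw [abs_mul]
    exact mul_le_mul hu hS (abs_nonneg _) ((abs_nonneg u).trans hu)
  have hA' : |A| ≤ |A + u * ∑ j ∈ s, a j / z j| + |u * ∑ j ∈ s, a j / z j| := by
    simpa using abs_add_le (A + u * ∑ j ∈ s, a j / z j) (-(u * ∑ j ∈ s, a j / z j))
  rw [abs_of_nonneg hA] at hA'
  rw [sub_div, mul_div_cancel_right₀ _ hδ.ne', mul_div_assoc]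
  linarith

theorem chebyshev_denominator_bound_general (m n : ℕ) (x : Fin m → ℝ) (α : Fin m → ℕ)
    (i : Fin m) (y c d : ℝ)
    (hn : (n : ℝ) = ∑ j : Fin m, (α j : ℝ))
    (hsep : ∀ j, j ≠ i → d ≤ |x i - x j|)
    (hy : |y - x i| ≤ c) (hd : 0 < d - 2 * c)
    (hden : 0 < (α i : ℝ) * (d - 2 * c) - c * ((n : ℝ) - (α i : ℝ)))
    (P : ℝ → ℝ) (hP : P = fun t => ∏ j : Fin m, (t - x j) ^ (α j)) :
    (((α i : ℝ) * (d - 2 * c) - c * ((n : ℝ) - (α i : ℝ))) / (d - 2 * c) ≤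
        |(α i : ℝ) + (y - x i) * ∑ j ∈ Finset.univ.erase i, (α j : ℝ) / (y - x j)| ∧
      0 < ((α i : ℝ) * (d - 2 * c) - c * ((n : ℝ) - (α i : ℝ))) / (d - 2 * c)) ∧
    (y ≠ x i → deriv P y * (y - x i) ≠ 0) := by
  have hc : 0 ≤ c := (abs_nonneg _).trans hy
  have hfar : ∀ j ∈ univ.erase i, d - 2 * c ≤ |y - x j| := fun j hj => by
    have := hsep j (ne_of_mem_erase hj)
    have := abs_sub_le (x i) y (x j)
    rw [abs_sub_comm (x i) y] at this
    linarith
  have hrest : ∑ j ∈ univ.erase i, (α j : ℝ) = n - α i := by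
    rw [hn, sum_erase_eq_sub (mem_univ i)]
  have hbound := div_le_abs_add_mul_sum_div (Nat.cast_nonneg (α i))
    (fun j _ => Nat.cast_nonneg (α j)) hd hfar hy
  rw [hrest] at hbound
  have hpos := div_pos hden hd
  refine ⟨⟨hbound, hpos⟩, fun hyi => ?_⟩
  have hroots : ∀ j ∈ univ, y ≠ x j := fun j _ => by
    rcases eq_or_ne j i with rfl | hj
    · exact hyi
    · intro h
      have := hfar j (mem_erase.2 ⟨hj, mem_univ j⟩)
      rw [h, sub_self, abs_zero] at this
      linarith
  rw [hP, deriv_prod_sub_pow _ x α hroots, mul_assoc, sum_div_sub_mul_sub_eq (mem_univ i) _ x hyi]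
  exact mul_ne_zero (prod_ne_zero_iff.2 fun j hj => pow_ne_zero _ (sub_ne_zero.2 (hroots j hj)))
    (abs_pos.1 (hpos.trans_le hbound))

/-- Lower bound on `Pᵢ = α i + (y − x i)·∑_{j≠i} α j/(y − x j)`: if `|y − x i| ≤ c`,
`d − 2c > 0`, all other roots are at distance `≥ d` from `x i`, and
`α i (d − 2c) − c(n − α i) > 0`, then
`|Pᵢ| ≥ (α i (d − 2c) − c(n − α i))/(d − 2c) > 0`; in particular
`P'(y)·(y − x i) ≠ 0` whenever `y ≠ x i`. -/
theorem chebyshev_denominator_bound (m n : ℕ) (x : Fin m → ℝ) (α : Fin m → ℕ)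
    (i : Fin m) (y c d : ℝ)
    (hα : ∀ j, 0 < α j) (hn : (n : ℝ) = ∑ j : Fin m, (α j : ℝ))
    (hsep : ∀ j, j ≠ i → d ≤ |x i - x j|)
    (hy : |y - x i| ≤ c) (hd : 0 < d - 2 * c)
    (hden : 0 < (α i : ℝ) * (d - 2 * c) - c * ((n : ℝ) - (α i : ℝ)))
    (P : ℝ → ℝ) (hP : P = fun t => ∏ j : Fin m, (t - x j) ^ (α j)) :
    (((α i : ℝ) * (d - 2 * c) - c * ((n : ℝ) - (α i : ℝ))) / (d - 2 * c) ≤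
        |(α i : ℝ) + (y - x i) * ∑ j ∈ Finset.univ.erase i, (α j : ℝ) / (y - x j)| ∧
      0 < ((α i : ℝ) * (d - 2 * c) - c * ((n : ℝ) - (α i : ℝ))) / (d - 2 * c)) ∧
    (y ≠ x i → deriv P y * (y - x i) ≠ 0) :=
  chebyshev_denominator_bound_general m n x α i y c d hn hsep hy hd hden P hP
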